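/- The gain of a delegation game, defined as the average accuracy of its worst pure Nash equilibrium minus the average accuracy of the all-direct-voting profile, is bounded below by -1/2 and above by 1/2, and both bounds are tight: for every δ > 0 there are delegation games with gain above 1/2 - δ and games with gain below -1/2 + δ. -/

import Mathlib

/-!
Every individual accuracy, hence every average accuracy, lies in `[1/2, 1]`, so the gain, a
difference of two such averages, lies in `[-1/2, 1/2]`.

For tightness from above, take a perfect guru and `m` agents of accuracy `1/2` who may delegate
only to it: any agent voting directly would gain by delegating, so the only equilibrium is
everyone delegating to the guru, with average accuracy `1`, while direct voting averages
`1/2 + 1/(2(m+1))`. From below, two perfect voters whose direct vote costs `1/2` are content in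
the delegation cycle between them, whose accuracy is `1/2`, while direct voting has accuracy `1`.
-/

open Classical in
noncomputable def homAcc {n : ℕ} (q : Fin n → ℝ) (d : Fin n → Fin n) (i : Fin n) : ℝ :=
  if h : ∃ k, d (d^[k] i) = d^[k] i then q (d^[Nat.find h] i) else 1/2

noncomputable def homUtil {n : ℕ} (q e : Fin n → ℝ) (d : Fin n → Fin n) (i : Fin n) : ℝ :=
  if d i = i then q i - e i else homAcc q d i

noncomputable def homAvg {n : ℕ} (q : Fin n → ℝ) (d : Fin n → Fin n) : ℝ :=
  (∑ i, homAcc q d i) / n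

def validProfile {n : ℕ} (R : Fin n → Fin n → Prop) (d : Fin n → Fin n) : Prop :=
  ∀ i, d i = i ∨ R i (d i)

noncomputable def isNE {n : ℕ} (R : Fin n → Fin n → Prop) (q e : Fin n → ℝ)
    (d : Fin n → Fin n) : Prop :=
  validProfile R d ∧
    ∀ i j, (j = i ∨ R i j) → homUtil q e (Function.update d i j) i ≤ homUtil q e d i

/-- The gain of a delegation game: average accuracy of the worst pure Nash equilibrium
minus the average accuracy of the all-direct-voting profile. -/
noncomputable def gain {n : ℕ} (R : Fin n → Fin n → Prop) (q e : Fin n → ℝ) : ℝ :=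
  sInf {a : ℝ | ∃ d, isNE R q e d ∧ a = homAvg q d} - (∑ i, q i) / n

def neAvgs {n : ℕ} (R : Fin n → Fin n → Prop) (q e : Fin n → ℝ) : Set ℝ :=
  {a | ∃ d, isNE R q e d ∧ a = homAvg q d}

theorem gain_eq_sInf_neAvgs_sub {n : ℕ} (R : Fin n → Fin n → Prop) (q e : Fin n → ℝ) :
    gain R q e = sInf (neAvgs R q e) - (∑ i, q i) / n :=
  rfl

theorem csInf_mem_Icc_of_subset {α : Type*} [ConditionallyCompleteLattice α] {s : Set α}
    {a b : α} (hs : s.Nonempty) (hsub : s ⊆ Set.Icc a b) : sInf s ∈ Set.Icc a b :=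
  ⟨le_csInf hs fun _ hx => (hsub hx).1,
    (csInf_le ⟨a, fun _ hx => (hsub hx).1⟩ hs.some_mem).trans (hsub hs.some_mem).2⟩

theorem sum_div_card_mem_Icc {n : ℕ} (hn : 0 < n) {f : Fin n → ℝ} {a b : ℝ}
    (hf : ∀ i, f i ∈ Set.Icc a b) : (∑ i, f i) / n ∈ Set.Icc a b := by
  have hn' : (0 : ℝ) < n := by exact_mod_cast hn
  have hlow : n • a ≤ ∑ i, f i := by
    simpa using Finset.card_nsmul_le_sum Finset.univ f a fun i _ => (hf i).1
  have hup : ∑ i, f i ≤ n • b := by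
    simpa using Finset.sum_le_card_nsmul Finset.univ f b fun i _ => (hf i).2
  rw [nsmul_eq_mul] at hlow hup
  exact ⟨(le_div_iff₀ hn').2 (by linarith), (div_le_iff₀ hn').2 (by linarith)⟩

section Accuracy

variable {n : ℕ} {q e : Fin n → ℝ} {d : Fin n → Fin n}

theorem homAcc_mem_Icc (hq : ∀ i, q i ∈ Set.Icc (1/2 : ℝ) 1) (d : Fin n → Fin n) (i : Fin n) :
    homAcc q d i ∈ Set.Icc (1/2 : ℝ) 1 := by
  unfold homAcc
  split
  · exact hq _
  · norm_num

theorem homAvg_mem_Icc (hn : 0 < n) (hq : ∀ i, q i ∈ Set.Icc (1/2 : ℝ) 1) (d : Fin n → Fin n) :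
    homAvg q d ∈ Set.Icc (1/2 : ℝ) 1 :=
  sum_div_card_mem_Icc hn (homAcc_mem_Icc hq d)

theorem homUtil_le_one (hq : ∀ i, q i ∈ Set.Icc (1/2 : ℝ) 1) (he : ∀ i, 0 ≤ e i)
    (d : Fin n → Fin n) (i : Fin n) : homUtil q e d i ≤ 1 := by
  unfold homUtil
  split
  · linarith [(hq i).2, he i]
  · exact (homAcc_mem_Icc hq d i).2

theorem homAcc_of_apply_eq_fixedPt {z i : Fin n} (hz : d z = z) (hi : d i = z) :
    homAcc q d i = q z := by
  have hiter : ∀ k, d^[k + 1] i = z := fun k => by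
    rw [Function.iterate_succ_apply, hi, Function.iterate_fixed hz]
  have hex : ∃ k, d (d^[k] i) = d^[k] i := ⟨1, by rw [hiter 0, hz]⟩
  rw [homAcc, dif_pos hex]
  have hspec := Nat.find_spec hex
  cases hk : Nat.find hex with
  | zero =>
    rw [hk, Function.iterate_zero_apply] at hspec
    rw [Function.iterate_zero_apply, ← hi, hspec]
  | succ k => rw [hiter k]

theorem homAcc_of_forall_apply_ne (hd : ∀ j, d j ≠ j) (q : Fin n → ℝ) (i : Fin n) :
    homAcc q d i = 1/2 :=
  dif_neg fun ⟨_, hk⟩ => hd _ hk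

theorem le_homUtil_of_isNE {R : Fin n → Fin n → Prop} (hd : isNE R q e d) {z i : Fin n}
    (hz : d z = z) (hiz : i ≠ z) (hR : R i z) : q z ≤ homUtil q e d i := by
  have hupd_i : Function.update d i z i = z := Function.update_self i z d
  have hupd_z : Function.update d i z z = z := by rw [Function.update_of_ne hiz.symm, hz]
  calc q z = homUtil q e (Function.update d i z) i := by
        rw [homUtil, if_neg (by rw [hupd_i]; exact hiz.symm),
          homAcc_of_apply_eq_fixedPt hupd_z hupd_i]
    _ ≤ homUtil q e d i := hd.2 i z (Or.inr hR)

theorem isNE_of_one_le_homUtil {R : Fin n → Fin n → Prop} (hq : ∀ i, q i ∈ Set.Icc (1/2 : ℝ) 1)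
    (he : ∀ i, 0 ≤ e i) (hvalid : validProfile R d) (hd : ∀ i, 1 ≤ homUtil q e d i) :
    isNE R q e d :=
  ⟨hvalid, fun i _ _ => (homUtil_le_one hq he _ i).trans (hd i)⟩

theorem gain_mem_Icc {R : Fin n → Fin n → Prop} (hn : 0 < n)
    (hq : ∀ i, q i ∈ Set.Icc (1/2 : ℝ) 1) (hne : ∃ d, isNE R q e d) :
    gain R q e ∈ Set.Icc (-(1/2) : ℝ) (1/2) := by
  obtain ⟨d, hd⟩ := hne
  have hinf : sInf (neAvgs R q e) ∈ Set.Icc (1/2 : ℝ) 1 :=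
    csInf_mem_Icc_of_subset ⟨_, d, hd, rfl⟩ fun _ ⟨d', _, ha⟩ => ha ▸ homAvg_mem_Icc hn hq d'
  have hdirect := sum_div_card_mem_Icc hn hq
  rw [gain_eq_sInf_neAvgs_sub]
  exact ⟨by linarith [hinf.1, hdirect.2], by linarith [hinf.2, hdirect.1]⟩

end Accuracy

section Star

variable (m : ℕ)

noncomputable def starQ : Fin (m + 1) → ℝ := fun i => if i = 0 then 1 else 1/2

def starR : Fin (m + 1) → Fin (m + 1) → Prop := fun _ j => j = 0

theorem starQ_mem_Icc (i : Fin (m + 1)) : starQ m i ∈ Set.Icc (1/2 : ℝ) 1 := by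
  unfold starQ
  split <;> norm_num

theorem sum_starQ : ∑ i, starQ m i = 1 + m / 2 := by
  simp [Fin.sum_univ_succ, starQ, Fin.succ_ne_zero, div_eq_mul_inv]

theorem homUtil_starQ_const_zero (i : Fin (m + 1)) : homUtil (starQ m) 0 (fun _ => 0) i = 1 := by
  by_cases hi : i = 0
  · simp [homUtil, starQ, hi]
  · rw [homUtil, if_neg (Ne.symm hi), homAcc_of_apply_eq_fixedPt rfl rfl]
    simp [starQ]

theorem isNE_star_iff (d : Fin (m + 1) → Fin (m + 1)) :
    isNE (starR m) (starQ m) 0 d ↔ d = fun _ => 0 := by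
  constructor
  · intro hd
    have hd0 : d 0 = 0 := (hd.1 0).elim id id
    funext i
    by_cases hi : i = 0
    · rw [hi, hd0]
    refine (hd.1 i).resolve_left fun hdi => ?_
    have hle := le_homUtil_of_isNE hd hd0 hi rfl
    simp [homUtil, hdi, starQ, hi] at hle
    norm_num at hle
  · rintro rfl
    exact isNE_of_one_le_homUtil (starQ_mem_Icc m) (fun _ => le_rfl) (fun _ => Or.inr rfl)
      fun i => (homUtil_starQ_const_zero m i).ge

theorem homAvg_starQ_const_zero : homAvg (starQ m) (fun _ => 0) = 1 := by
  have hacc : ∀ i, homAcc (starQ m) (fun _ => 0) i = 1 := fun _ => by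
    rw [homAcc_of_apply_eq_fixedPt rfl rfl]
    simp [starQ]
  simp only [homAvg, hacc, Finset.sum_const, Finset.card_univ, Fintype.card_fin, nsmul_eq_mul,
    mul_one]
  exact div_self (by positivity)

theorem gain_star : gain (starR m) (starQ m) 0 = 1/2 - 1 / (2 * (m + 1)) := by
  have hS : neAvgs (starR m) (starQ m) 0 = {1} := by
    ext a
    simp [neAvgs, isNE_star_iff, homAvg_starQ_const_zero]
  rw [gain_eq_sInf_neAvgs_sub, hS, csInf_singleton, sum_starQ]
  push_cast
  field_simp
  ring

end Star

section Swap

theorem isNE_swap : isNE (fun _ _ => True) 1 (fun _ => 1/2) (Fin.rev : Fin 2 → Fin 2) := by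
  have hrev : ∀ j : Fin 2, Fin.rev j ≠ j := by decide
  have hutil : ∀ i, homUtil 1 (fun _ => 1/2) Fin.rev i = 1/2 := fun i => by
    rw [homUtil, if_neg (hrev i), homAcc_of_forall_apply_ne hrev]
  refine ⟨fun _ => Or.inr trivial, fun i j _ => ?_⟩
  by_cases hji : j = i
  · subst hji
    rw [homUtil, if_pos (Function.update_self j j Fin.rev), hutil]
    norm_num
  · have hj : j = Fin.rev i := by revert hji; revert i j; decide
    rw [hj, Function.update_eq_self]

theorem homAvg_swap : homAvg (1 : Fin 2 → ℝ) Fin.rev = 1/2 := by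
  simp only [homAvg, homAcc_of_forall_apply_ne (by decide : ∀ j : Fin 2, Fin.rev j ≠ j)]
  norm_num

theorem gain_swap : gain (fun _ _ => True : Fin 2 → Fin 2 → Prop) 1 (fun _ => 1/2) = -(1/2) := by
  have hq : ∀ i : Fin 2, (1 : Fin 2 → ℝ) i ∈ Set.Icc (1/2 : ℝ) 1 := fun _ => by norm_num
  have hinf : sInf (neAvgs (fun _ _ => True) 1 (fun _ => 1/2)) ≤ 1/2 :=
    csInf_le ⟨1/2, fun _ ⟨d, _, ha⟩ => ha ▸ (homAvg_mem_Icc two_pos hq d).1⟩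
      ⟨Fin.rev, isNE_swap, homAvg_swap.symm⟩
  refine le_antisymm ?_ (gain_mem_Icc two_pos hq ⟨_, isNE_swap⟩).1
  rw [gain_eq_sInf_neAvgs_sub]
  norm_num
  linarith

end Swap

theorem delegation_game_gain_bounds :
    (∀ (n : ℕ), 0 < n → ∀ (R : Fin n → Fin n → Prop) (q e : Fin n → ℝ),
      (∀ i, q i ∈ Set.Icc (1/2 : ℝ) 1) → (∀ i, 0 ≤ e i) → (∀ i, 1/2 ≤ q i - e i) →
      (∃ d, isNE R q e d) →
      -(1/2) ≤ gain R q e ∧ gain R q e ≤ 1/2) ∧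
    (∀ δ : ℝ, 0 < δ →
      (∃ (n : ℕ) (_ : 0 < n) (R : Fin n → Fin n → Prop) (q e : Fin n → ℝ),
        (∀ i, q i ∈ Set.Icc (1/2 : ℝ) 1) ∧ (∀ i, 0 ≤ e i) ∧ (∀ i, 1/2 ≤ q i - e i) ∧
        (∃ d, isNE R q e d) ∧ 1/2 - δ < gain R q e) ∧
      (∃ (n : ℕ) (_ : 0 < n) (R : Fin n → Fin n → Prop) (q e : Fin n → ℝ),
        (∀ i, q i ∈ Set.Icc (1/2 : ℝ) 1) ∧ (∀ i, 0 ≤ e i) ∧ (∀ i, 1/2 ≤ q i - e i) ∧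
        (∃ d, isNE R q e d) ∧ gain R q e < -(1/2) + δ)) := by
  refine ⟨fun n hn R q e hq _ _ hne => gain_mem_Icc hn hq hne, fun δ hδ => ⟨?_, ?_⟩⟩
  · obtain ⟨m, hm⟩ := exists_nat_one_div_lt hδ
    have hsmall : 1 / (2 * ((m : ℝ) + 1)) < δ :=
      lt_of_le_of_lt (one_div_le_one_div_of_le (by positivity) (by linarith)) hm
    refine ⟨m + 1, m.succ_pos, starR m, starQ m, 0, starQ_mem_Icc m, fun _ => le_rfl,
      fun i => by simpa using (starQ_mem_Icc m i).1, ⟨_, (isNE_star_iff m _).2 rfl⟩, ?_⟩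
    rw [gain_star]
    linarith
  · refine ⟨2, two_pos, fun _ _ => True, 1, fun _ => 1/2, fun _ => by norm_num,
      fun _ => by norm_num, fun _ => by norm_num, ⟨_, isNE_swap⟩, ?_⟩
    rw [gain_swap]
    linarith
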